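/- arXiv:2508.06792 — 2 statements merged into one kernel-verified Lean document; each statement's English description precedes it below -/
import Mathlib

section
/- Define the differences from the maximum u_k = x_m − x_k for each index k ≠ m, and set Q = Σ_{k≠m} u_k and R² = Σ_{k≠m} u_k². Then the associated statistic h̃* = sqrt(2/(n−2)) · h* satisfies (h̃*)² = R² / ( (n−1)·R² − Q² ). -/
/-!
With `u k = x m - x k`, every difference `x i - x j` equals `u j - u i`, so the sum over
unordered pairs in the denominator of `h*` is half of `∑ i, ∑ j, (u i - u j) ^ 2`, which
Lagrange's identity evaluates as `2 * ((n - 1) * R² - Q²)`; the numerator is `R²`, and the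
factors `n - 1`, `n - 2` and `2` cancel against the normalisations.
-/

open Finset Real

noncomputable def pairSum {n : ℕ} (x : Fin n → ℝ) (m : Fin n) : ℝ :=
  ∑ p ∈ Finset.univ.filter (fun p : Fin n × Fin n => p.1 < p.2 ∧ p.1 ≠ m ∧ p.2 ≠ m),
    (x p.1 - x p.2) ^ 2

/-- The h* statistic with reference index `m`. -/
noncomputable def hstar {n : ℕ} (x : Fin n → ℝ) (m : Fin n) : ℝ :=
  Real.sqrt (((∑ k, (x k - x m) ^ 2) / ((n : ℝ) - 1)) /
    (pairSum x m / (((n : ℝ) - 1) * ((n : ℝ) - 2) / 2)))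

theorem Finset.sum_sum_sub_sq {ι R : Type*} [CommRing R] (s : Finset ι) (u : ι → R) :
    ∑ i ∈ s, ∑ j ∈ s, (u i - u j) ^ 2 =
      2 * (#s * ∑ i ∈ s, u i ^ 2 - (∑ i ∈ s, u i) ^ 2) := by
  simp only [sub_sq, sum_add_distrib, sum_sub_distrib, sum_const, nsmul_eq_mul, ← mul_sum,
    ← sum_mul, mul_assoc]
  ring

theorem Finset.sum_sum_eq_two_nsmul_sum_lt {ι M : Type*} [LinearOrder ι] [AddCommMonoid M]
    (s : Finset ι) (f : ι → ι → M) (hsymm : ∀ i j, f i j = f j i) (hdiag : ∀ i, f i i = 0) :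
    ∑ i ∈ s, ∑ j ∈ s, f i j = 2 • ∑ p ∈ s ×ˢ s with p.1 < p.2, f p.1 p.2 := by
  have hsplit : ∀ i j, f i j = (if i < j then f i j else 0) + (if j < i then f j i else 0) := by
    intro i j
    rcases lt_trichotomy i j with h | rfl | h
    · simp [h, h.not_gt]
    · simp [hdiag]
    · simp [h, h.not_gt, hsymm i j]
  calc ∑ i ∈ s, ∑ j ∈ s, f i j
      = ∑ i ∈ s, ∑ j ∈ s, (if i < j then f i j else 0)
        + ∑ i ∈ s, ∑ j ∈ s, (if j < i then f j i else 0) := by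
        simp only [← sum_add_distrib, ← hsplit]
    _ = _ := by
        rw [sum_comm (f := fun i j => if j < i then f j i else 0), ← two_nsmul, sum_filter,
          sum_product]

theorem pairSum_nonneg {n : ℕ} (x : Fin n → ℝ) (m : Fin n) : 0 ≤ pairSum x m :=
  sum_nonneg fun _ _ => sq_nonneg _

theorem pairSum_eq {n : ℕ} (x : Fin n → ℝ) (m : Fin n) :
    pairSum x m = ((n : ℝ) - 1) * ∑ k ∈ univ.filter (· ≠ m), (x m - x k) ^ 2
      - (∑ k ∈ univ.filter (· ≠ m), (x m - x k)) ^ 2 := by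
  set S := univ.filter (· ≠ m)
  have hcard : (#S : ℝ) = n - 1 := by
    rw [show S = univ.erase m from filter_ne' _ _, card_erase_of_mem (mem_univ m), card_univ,
      Fintype.card_fin, Nat.cast_pred m.pos]
  have hpairs : univ.filter (fun p : Fin n × Fin n => p.1 < p.2 ∧ p.1 ≠ m ∧ p.2 ≠ m)
      = (S ×ˢ S).filter (fun p => p.1 < p.2) := by
    ext p
    simp only [S, mem_filter, mem_product, mem_univ, true_and]
    tauto
  have htwice : ∑ i ∈ S, ∑ j ∈ S, ((x m - x i) - (x m - x j)) ^ 2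
      = 2 • ∑ p ∈ S ×ˢ S with p.1 < p.2, (x p.1 - x p.2) ^ 2 := by
    rw [← sum_sum_eq_two_nsmul_sum_lt S (fun i j => (x i - x j) ^ 2) (fun i j => by ring)
      (fun i => by ring)]
    exact sum_congr rfl fun i _ => sum_congr rfl fun j _ => by ring
  rw [sum_sum_sub_sq, hcard, two_nsmul] at htwice
  rw [pairSum, hpairs]
  linarith

theorem htilde_sq_eq_general {n : ℕ} (hn : 3 ≤ n) (x : Fin n → ℝ) (m : Fin n)
    (Q R2 : ℝ)
    (hQ : Q = ∑ k ∈ Finset.univ.filter (fun k => k ≠ m), (x m - x k))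
    (hR2 : R2 = ∑ k ∈ Finset.univ.filter (fun k => k ≠ m), (x m - x k) ^ 2) :
    (Real.sqrt (2 / ((n : ℝ) - 2)) * hstar x m) ^ 2 =
      R2 / (((n : ℝ) - 1) * R2 - Q ^ 2) := by
  have hn3 : (3 : ℝ) ≤ n := by exact_mod_cast hn
  have hnum : ∑ k, (x k - x m) ^ 2 = R2 := by
    rw [hR2, filter_ne', sum_erase _ (by ring)]
    exact sum_congr rfl fun k _ => by ring
  have hden : pairSum x m = ((n : ℝ) - 1) * R2 - Q ^ 2 := by rw [hQ, hR2, pairSum_eq]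
  have hn1 : (0 : ℝ) < n - 1 := by linarith
  have hn2 : (0 : ℝ) < n - 2 := by linarith
  have hhstar_sq : hstar x m ^ 2 = R2 / (n - 1) / (pairSum x m / ((n - 1) * (n - 2) / 2)) := by
    rw [hstar, sq_sqrt, hnum]
    exact div_nonneg (div_nonneg (sum_nonneg fun _ _ => sq_nonneg _) hn1.le)
      (div_nonneg (pairSum_nonneg x m) (half_pos (mul_pos hn1 hn2)).le)
  rw [mul_pow, sq_sqrt (div_nonneg zero_le_two hn2.le), hhstar_sq, ← hden, div_div_eq_mul_div]
  field_simp

/-- with `u_k = x_m − x_k` for `k ≠ m`, `Q = Σ u_k`, `R² = Σ u_k²`,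
the rescaled statistic `h̃* = sqrt(2/(n−2))·h*` satisfies
`(h̃*)² = R² / ((n−1)·R² − Q²)`. -/
theorem htilde_sq_eq {n : ℕ} (hn : 3 ≤ n) (x : Fin n → ℝ) (m : Fin n)
    (hmax : ∀ k, x k ≤ x m)
    (hne : ∃ i j, i ≠ m ∧ j ≠ m ∧ x i ≠ x j)
    (Q R2 : ℝ)
    (hQ : Q = ∑ k ∈ Finset.univ.filter (fun k => k ≠ m), (x m - x k))
    (hR2 : R2 = ∑ k ∈ Finset.univ.filter (fun k => k ≠ m), (x m - x k) ^ 2) :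
    (Real.sqrt (2 / ((n : ℝ) - 2)) * hstar x m) ^ 2 =
      R2 / (((n : ℝ) - 1) * R2 - Q ^ 2) :=
  htilde_sq_eq_general hn x m Q R2 hQ hR2
end

section
/- The h* statistic always satisfies h* ≥ 1/√2; equivalently, (h*)² ≥ 1/2 for every admissible data set. -/
/-!
Put `y k = x m - x k ≥ 0`. For nonnegative reals `(y i - y j)² ≤ y i² + y j²`, and summing the
right-hand side over the pairs `i < j` of indices other than `m` counts every `y k²` exactly
`n - 2` times. Hence `pairSum x m ≤ (n - 2) * ∑ k, (x k - x m)²`, which after clearing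
denominators is `(h*)² ≥ 1/2`.
-/

open Finset Real

namespace Finset

theorem sum_offDiag_eq_sum_lt_add_swap {ι M : Type*} [LinearOrder ι] [AddCommMonoid M]
    (s : Finset ι) (f : ι × ι → M) :
    ∑ p ∈ s.offDiag, f p = ∑ p ∈ s.offDiag with p.1 < p.2, (f p + f p.swap) := by
  rw [sum_add_distrib, ← sum_filter_add_sum_filter_not s.offDiag (fun p => p.1 < p.2)]
  congr 1
  refine sum_nbij' Prod.swap Prod.swap ?_ ?_ (fun _ _ => rfl) (fun _ _ => rfl) (fun _ _ => rfl)
  · intro p hp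
    simp only [mem_filter, mem_offDiag, Prod.fst_swap, Prod.snd_swap] at hp ⊢
    exact ⟨⟨hp.1.2.1, hp.1.1, hp.1.2.2.symm⟩, (lt_or_gt_of_ne hp.1.2.2).resolve_left hp.2⟩
  · intro p hp
    simp only [mem_filter, mem_offDiag, Prod.fst_swap, Prod.snd_swap] at hp ⊢
    exact ⟨⟨hp.1.2.1, hp.1.1, hp.1.2.2.symm⟩, hp.2.asymm⟩

theorem sum_offDiag_fst {ι M : Type*} [DecidableEq ι] [AddCommMonoid M] (s : Finset ι)
    (g : ι → M) : ∑ p ∈ s.offDiag, g p.1 = (#s - 1) • ∑ i ∈ s, g i := by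
  rw [sum_finset_product s.offDiag s (fun i => s.erase i) (by simp [and_comm, eq_comm]),
    smul_sum]
  refine sum_congr rfl fun i hi => ?_
  rw [sum_const (b := g i), card_erase_of_mem hi]

theorem sum_offDiag_lt_sq_sub_le {ι R : Type*} [LinearOrder ι] [CommRing R]
    [LinearOrder R] [IsStrictOrderedRing R] (s : Finset ι) {y : ι → R}
    (hy : ∀ i ∈ s, 0 ≤ y i) :
    ∑ p ∈ s.offDiag with p.1 < p.2, (y p.1 - y p.2) ^ 2 ≤ (#s - 1) • ∑ i ∈ s, y i ^ 2 := by
  calc ∑ p ∈ s.offDiag with p.1 < p.2, (y p.1 - y p.2) ^ 2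
      ≤ ∑ p ∈ s.offDiag with p.1 < p.2, (y p.1 ^ 2 + y p.2 ^ 2) := by
        refine sum_le_sum fun p hp => ?_
        obtain ⟨h₁, h₂, -⟩ := mem_offDiag.1 (mem_filter.1 hp).1
        nlinarith [mul_nonneg (hy _ h₁) (hy _ h₂)]
    _ = ∑ p ∈ s.offDiag, y p.1 ^ 2 := (sum_offDiag_eq_sum_lt_add_swap s _).symm
    _ = (#s - 1) • ∑ i ∈ s, y i ^ 2 := sum_offDiag_fst s fun i => y i ^ 2

end Finset

theorem pairSum_eq_sum_offDiag {n : ℕ} (x : Fin n → ℝ) (m : Fin n) :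
    pairSum x m = ∑ p ∈ (univ.erase m).offDiag with p.1 < p.2, (x p.1 - x p.2) ^ 2 := by
  unfold pairSum
  congr 1
  ext p
  simp only [mem_filter, mem_univ, true_and, mem_offDiag, mem_erase, and_true]
  constructor
  · rintro ⟨hlt, h₁, h₂⟩
    exact ⟨⟨h₁, h₂, hlt.ne⟩, hlt⟩
  · rintro ⟨⟨h₁, h₂, -⟩, hlt⟩
    exact ⟨hlt, h₁, h₂⟩

theorem pairSum_le {n : ℕ} (hn : 2 ≤ n) (x : Fin n → ℝ) (m : Fin n)
    (hmax : ∀ k, x k ≤ x m) :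
    pairSum x m ≤ ((n : ℝ) - 2) * ∑ k, (x k - x m) ^ 2 := by
  have hbound := (univ.erase m).sum_offDiag_lt_sq_sub_le (y := fun k => x m - x k)
    fun k _ => sub_nonneg.2 (hmax k)
  rw [card_erase_of_mem (mem_univ m), card_univ, Fintype.card_fin, nsmul_eq_mul,
    sum_erase univ (f := fun k => (x m - x k) ^ 2) (by simp)] at hbound
  calc pairSum x m
      = ∑ p ∈ (univ.erase m).offDiag with p.1 < p.2, (x m - x p.1 - (x m - x p.2)) ^ 2 := by
        rw [pairSum_eq_sum_offDiag]
        exact sum_congr rfl fun p _ => by ring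
    _ ≤ ((n - 1 - 1 : ℕ) : ℝ) * ∑ k, (x m - x k) ^ 2 := hbound
    _ = ((n : ℝ) - 2) * ∑ k, (x k - x m) ^ 2 := by
        rw [show n - 1 - 1 = n - 2 by omega, Nat.cast_sub hn, Nat.cast_two]
        exact congrArg _ (sum_congr rfl fun k _ => by ring)

theorem pairSum_pos {n : ℕ} (x : Fin n → ℝ) (m : Fin n)
    (hne : ∃ i j, i ≠ m ∧ j ≠ m ∧ x i ≠ x j) : 0 < pairSum x m := by
  obtain ⟨i, j, hi, hj, hij⟩ := hne
  wlog hlt : i < j generalizing i j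
  · exact this j i hj hi hij.symm <|
      (lt_or_gt_of_ne fun h => hij (congrArg x h)).resolve_left hlt
  rw [pairSum_eq_sum_offDiag]
  refine sum_pos' (fun _ _ => sq_nonneg _) ⟨(i, j), ?_, ?_⟩
  · simp [hi, hj, hlt, hlt.ne]
  · exact sq_pos_of_ne_zero (sub_ne_zero.2 hij)

theorem hstar_sq {n : ℕ} (hn : 3 ≤ n) (x : Fin n → ℝ) (m : Fin n) :
    hstar x m ^ 2 = ((n : ℝ) - 2) * (∑ k, (x k - x m) ^ 2) / (2 * pairSum x m) := by
  have hn' : (3 : ℝ) ≤ n := by exact_mod_cast hn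
  have hn₁ : (0 : ℝ) < n - 1 := by linarith
  have hn₂ : (0 : ℝ) < n - 2 := by linarith
  have hS : 0 ≤ ∑ k, (x k - x m) ^ 2 := sum_nonneg fun _ _ => sq_nonneg _
  have hP : 0 ≤ pairSum x m := sum_nonneg fun _ _ => sq_nonneg _
  rw [hstar, sq_sqrt (by positivity), div_div_eq_mul_div, ← div_div]
  congr 1
  field_simp

/-- the h* statistic always satisfies `h* ≥ 1/√2`; equivalently
`(h*)² ≥ 1/2`. -/
theorem hstar_ge {n : ℕ} (hn : 3 ≤ n) (x : Fin n → ℝ) (m : Fin n)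
    (hmax : ∀ k, x k ≤ x m)
    (hne : ∃ i j, i ≠ m ∧ j ≠ m ∧ x i ≠ x j) :
    1 / Real.sqrt 2 ≤ hstar x m ∧ 1 / 2 ≤ (hstar x m) ^ 2 := by
  have hsq : 1 / 2 ≤ hstar x m ^ 2 := by
    rw [hstar_sq hn, le_div_iff₀ (mul_pos two_pos (pairSum_pos x m hne))]
    linarith [pairSum_le (by omega) x m hmax]
  refine ⟨?_, hsq⟩
  calc 1 / √2 = √(1 / 2) := by rw [sqrt_div' _ zero_le_two, sqrt_one]
    _ ≤ √(hstar x m ^ 2) := sqrt_le_sqrt hsq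
    _ = hstar x m := sqrt_sq (sqrt_nonneg _)
end
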